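/- The group H is isomorphic to a semidirect product H₃(ℝ) ⋊ ℝ, where ℝ is identified with the subgroup of H given by A=B=D=0 (matrices [[1,0,0,0],[0,1,0,C],[0,0,1,0],[0,0,0,1]]), and H₃(ℝ) with the image of φ. -/
import Mathlib


def Hmat (A B C D : ℝ) : Matrix (Fin 4) (Fin 4) ℝ :=
  !![1, A, B, D; 0, 1, A, C; 0, 0, 1, A; 0, 0, 0, 1]

noncomputable def phiMat (a b c : ℝ) : Matrix (Fin 4) (Fin 4) ℝ :=
  !![1, a, a ^ 2 / 2 + b, a ^ 3 / 6 + a * b - c;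
     0, 1, a, a ^ 2 / 2;
     0, 0, 1, a;
     0, 0, 0, 1]

/-- The one-parameter subgroup `N ⊂ H` obtained by setting `A = B = D = 0`. -/
def Nmat (t : ℝ) : Matrix (Fin 4) (Fin 4) ℝ := Hmat 0 0 t 0

lemma Hmat_inv (A B C D : ℝ) :
    (Hmat A B C D)⁻¹ =
      !![1, -A, A^2 - B, A*B + A*C - A^3 - D;
         0, 1, -A, A^2 - C;
         0, 0, 1, -A;
         0, 0, 0, 1] := by
  apply Matrix.inv_eq_right_inv
  ext i j
  fin_cases i <;> fin_cases j <;>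
    simp [Hmat, Matrix.mul_apply, Fin.sum_univ_four, Matrix.one_apply, Matrix.vecHead, Matrix.vecTail] <;> ring

set_option maxHeartbeats 1000000 in
/-- `H` is the (inner) semidirect product of the normal subgroup `φ(H₃(ℝ))` and the
subgroup `N ≅ ℝ`: the image of `φ` is normal in `H`, it intersects `N` trivially, and
every element of `H` is a product of an element of `φ(H₃(ℝ))` and an element of `N`.
Hence `H ≅ H₃(ℝ) ⋊ ℝ`. -/
theorem H_semidirect_product :
    (∀ A B C D a b c : ℝ, ∃ a' b' c' : ℝ,
      Hmat A B C D * phiMat a b c * (Hmat A B C D)⁻¹ = phiMat a' b' c') ∧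
    (∀ a b c t : ℝ, phiMat a b c = Nmat t → phiMat a b c = 1) ∧
    (∀ A B C D : ℝ, ∃ a b c t : ℝ, Hmat A B C D = phiMat a b c * Nmat t) := by
  refine ⟨?_, ?_, ?_⟩
  · intro A B C D a b c
    refine ⟨a, b, c + a * C + A * b - B * a, ?_⟩
    rw [Hmat_inv]
    ext i j
    fin_cases i <;> fin_cases j <;>
      simp [Hmat, phiMat, Matrix.mul_apply, Fin.sum_univ_four, Matrix.vecHead, Matrix.vecTail] <;> ring
  · intro a b c t h
    have h01 : phiMat a b c 0 1 = Nmat t 0 1 := by rw [h]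
    have h02 : phiMat a b c 0 2 = Nmat t 0 2 := by rw [h]
    have h03 : phiMat a b c 0 3 = Nmat t 0 3 := by rw [h]
    simp [phiMat, Nmat, Hmat, Matrix.vecHead, Matrix.vecTail] at h01
    simp [phiMat, Nmat, Hmat, Matrix.vecHead, Matrix.vecTail] at h02
    simp [phiMat, Nmat, Hmat, Matrix.vecHead, Matrix.vecTail] at h03
    subst h01
    have hb : b = 0 := by simpa using h02
    have hc : c = 0 := by
      rw [hb] at h03; simpa using h03
    subst hb hc
    ext i j
    fin_cases i <;> fin_cases j <;>
      simp [phiMat, Matrix.one_apply, Matrix.vecHead, Matrix.vecTail]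
  · intro A B C D
    refine ⟨A, B - A^2/2, A^3/6 + A*(B - A^2/2) + A*(C - A^2/2) - D, C - A^2/2, ?_⟩
    ext i j
    fin_cases i <;> fin_cases j <;>
      simp [Hmat, phiMat, Nmat, Matrix.mul_apply, Fin.sum_univ_four, Matrix.vecHead, Matrix.vecTail] <;> ring
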